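/- Define K(p) for a prime p ≥ 5 by K(p) = Σ_{k≥0} [εₘ(k)Pₘ(p,k) + εₐⁿ(k)Pₐⁿ(p,k) + εₐᵗ(p,k)Pₐᵗ(p,k) + P₀(p,k)] with the P's as in the local reduction probabilities and εₘ(k) = (1+√k)/2 for k odd, (√2+√k)/2 for k even, εₐⁿ(k) = 1,√2,(1+√3)/2,(1+√3)/2,√2,1 for k = 2,3,4,8,9,10 (0 otherwise), εₐᵗ(p,6) = 2/3+√2/2−1/(3p), εₐᵗ(p,k) = (√2+2)/2 for k ≥ 7 (0 otherwise). Then K(p) = 1 + O(1/p²), and consequently the product ∏_{p≥5} K(p) converges to a positive real number. -/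

import Mathlib

noncomputable def kap (p : ℕ) : ℝ := (1 - 1 / (p : ℝ) ^ 10)⁻¹

noncomputable def Pm (p k : ℕ) : ℝ :=
  if 1 ≤ k then kap p * (1 - 1 / (p : ℝ)) ^ 2 / (p : ℝ) ^ k else 0

noncomputable def Pan (p k : ℕ) : ℝ :=
  if k = 2 ∨ k = 3 ∨ k = 4 then kap p * (1 - 1 / (p : ℝ)) / (p : ℝ) ^ k
  else if k = 8 ∨ k = 9 ∨ k = 10 then kap p * (1 - 1 / (p : ℝ)) / (p : ℝ) ^ (k - 1)
  else 0

noncomputable def Pat (p k : ℕ) : ℝ :=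
  if k = 6 then kap p * (1 - 1 / (p : ℝ)) / (p : ℝ) ^ 5
  else if 7 ≤ k then kap p * (1 - 1 / (p : ℝ)) ^ 2 / (p : ℝ) ^ (k - 1)
  else 0

noncomputable def P0 (p k : ℕ) : ℝ :=
  if k = 0 then kap p * (1 - 1 / (p : ℝ)) else 0

noncomputable def epsm (k : ℕ) : ℝ :=
  if k % 2 = 1 then (1 + Real.sqrt k) / 2 else (Real.sqrt 2 + Real.sqrt k) / 2

noncomputable def epsan (k : ℕ) : ℝ :=
  if k = 2 then 1 else if k = 3 then Real.sqrt 2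
  else if k = 4 then (1 + Real.sqrt 3) / 2
  else if k = 8 then (1 + Real.sqrt 3) / 2
  else if k = 9 then Real.sqrt 2 else if k = 10 then 1 else 0

noncomputable def epsat (p k : ℕ) : ℝ :=
  if k = 6 then 2 / 3 + Real.sqrt 2 / 2 - 1 / (3 * (p : ℝ))
  else if 7 ≤ k then (Real.sqrt 2 + 2) / 2 else 0

noncomputable def K (p : ℕ) : ℝ :=
  ∑' k : ℕ, (epsm k * Pm p k + epsan k * Pan p k + epsat p k * Pat p k + P0 p k)

/-!
With `r = 1/p` and `κ = (1 - r¹⁰)⁻¹ = 1 + O(r¹⁰)`, the terms `k = 0, 1` of `K p` add up to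
`κ (1 - 2r² + r³) = 1 + O(r²)`, the term `k = 2` is `O(r²)`, and for `k ≥ 3` the `k`-th term is at
most `κ (k + 4) r^(k-1)`, a geometric tail of size `O(r²)`. Hence `∑_p |K p - 1| < ∞`, and since
every `K p` is positive, `∑_p log (K p)` converges and `∏_p K p = exp (∑_p log (K p)) > 0`.
-/

open Real

lemma Real.hasProd_of_summable_sub_one {ι : Type*} {f : ι → ℝ} (hpos : ∀ i, 0 < f i)
    (hf : Summable fun i ↦ f i - 1) : HasProd f (rexp (∑' i, log (f i))) :=
  hasProd_of_hasSum_log hpos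
    ((summable_log_one_add_of_summable hf).congr fun i ↦ by simp).hasSum

lemma hasSum_coe_add_mul_geometric {𝕜 : Type*} [NormedDivisionRing 𝕜] {r : 𝕜} (hr : ‖r‖ < 1)
    (c : 𝕜) : HasSum (fun k : ℕ ↦ ((k : 𝕜) + c) * r ^ k) (r / (1 - r) ^ 2 + c * (1 - r)⁻¹) := by
  convert (hasSum_coe_mul_geometric_of_norm_lt_one hr).add
    ((hasSum_geometric_of_norm_lt_one hr).mul_left c) using 1
  funext k
  rw [add_mul]

section LocalFactor

variable {p : ℕ}

lemma norm_inv_natCast_lt_one (hp : 2 ≤ p) : ‖(p : ℝ)⁻¹‖ < 1 := by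
  rw [norm_inv, Real.norm_natCast]
  exact inv_lt_one_of_one_lt₀ (by exact_mod_cast hp)

lemma inv_natCast_pow_ten_le_half (hp : 2 ≤ p) : (p : ℝ)⁻¹ ^ 10 ≤ 1 / 2 := by
  have h2 : (p : ℝ)⁻¹ ≤ 1 / 2 := by
    rw [one_div]; exact inv_anti₀ two_pos (by exact_mod_cast hp)
  exact (pow_le_of_le_one (by positivity) (h2.trans (by norm_num)) (by norm_num)).trans h2

lemma kap_eq (p : ℕ) : kap p = (1 - (p : ℝ)⁻¹ ^ 10)⁻¹ := by
  rw [kap, one_div, inv_pow]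

lemma kap_nonneg (p : ℕ) : 0 ≤ kap p := by
  rw [kap_eq]
  exact inv_nonneg.2 (sub_nonneg.2 (pow_le_one₀ (by positivity) (Nat.cast_inv_le_one p)))

lemma kap_mul_one_sub (hp : 2 ≤ p) : kap p * (1 - (p : ℝ)⁻¹ ^ 10) = 1 := by
  rw [kap_eq]
  exact inv_mul_cancel₀ (by linarith [inv_natCast_pow_ten_le_half hp])

lemma one_le_kap (hp : 2 ≤ p) : 1 ≤ kap p := by
  have h := inv_natCast_pow_ten_le_half hp
  rw [kap_eq, one_le_inv₀ (by linarith)]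
  linarith [pow_nonneg (inv_nonneg.2 (p.cast_nonneg : (0 : ℝ) ≤ p)) 10]

lemma kap_le_two (hp : 2 ≤ p) : kap p ≤ 2 := by
  have h := inv_natCast_pow_ten_le_half hp
  rw [kap_eq, inv_le_comm₀ (by linarith) two_pos]
  linarith

lemma one_sub_one_div_natCast_nonneg (p : ℕ) : 0 ≤ 1 - 1 / (p : ℝ) := by
  simpa only [sub_nonneg, one_div] using Nat.cast_inv_le_one p

lemma one_sub_one_div_natCast_le_one (p : ℕ) : 1 - 1 / (p : ℝ) ≤ 1 := by
  have : (0 : ℝ) ≤ 1 / p := by positivity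
  linarith

lemma kap_mul_div_pow_nonneg {a : ℝ} (ha : 0 ≤ a) (p k : ℕ) : 0 ≤ kap p * a / (p : ℝ) ^ k :=
  div_nonneg (mul_nonneg (kap_nonneg p) ha) (by positivity)

lemma kap_mul_div_pow_le {a : ℝ} (ha : a ≤ 1) (p k : ℕ) :
    kap p * a / (p : ℝ) ^ k ≤ kap p * (p : ℝ)⁻¹ ^ k := by
  rw [div_eq_mul_inv, ← inv_pow]
  exact mul_le_mul_of_nonneg_right (mul_le_of_le_one_right (kap_nonneg p) ha) (by positivity)

lemma kap_mul_inv_pow_le_pred (p k : ℕ) : kap p * (p : ℝ)⁻¹ ^ k ≤ kap p * (p : ℝ)⁻¹ ^ (k - 1) :=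
  mul_le_mul_of_nonneg_left
    (pow_le_pow_of_le_one (by positivity) (Nat.cast_inv_le_one p) (k.sub_le 1)) (kap_nonneg p)

lemma Pm_nonneg (p k : ℕ) : 0 ≤ Pm p k := by
  unfold Pm
  split_ifs
  exacts [kap_mul_div_pow_nonneg (sq_nonneg _) p k, le_rfl]

lemma Pan_nonneg (p k : ℕ) : 0 ≤ Pan p k := by
  unfold Pan
  split_ifs
  exacts [kap_mul_div_pow_nonneg (one_sub_one_div_natCast_nonneg p) p k,
    kap_mul_div_pow_nonneg (one_sub_one_div_natCast_nonneg p) p (k - 1), le_rfl]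

lemma Pat_nonneg (p k : ℕ) : 0 ≤ Pat p k := by
  unfold Pat
  split_ifs
  exacts [kap_mul_div_pow_nonneg (one_sub_one_div_natCast_nonneg p) p 5,
    kap_mul_div_pow_nonneg (sq_nonneg _) p (k - 1), le_rfl]

lemma P0_nonneg (p k : ℕ) : 0 ≤ P0 p k := by
  unfold P0
  split_ifs
  exacts [mul_nonneg (kap_nonneg p) (one_sub_one_div_natCast_nonneg p), le_rfl]

lemma one_sub_one_div_natCast_sq_le_one (p : ℕ) : (1 - 1 / (p : ℝ)) ^ 2 ≤ 1 :=
  pow_le_one₀ (one_sub_one_div_natCast_nonneg p) (one_sub_one_div_natCast_le_one p)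

lemma Pm_le (p k : ℕ) : Pm p k ≤ kap p * (p : ℝ)⁻¹ ^ k := by
  unfold Pm
  split_ifs
  exacts [kap_mul_div_pow_le (one_sub_one_div_natCast_sq_le_one p) p k,
    mul_nonneg (kap_nonneg p) (by positivity)]

lemma Pan_le (p k : ℕ) : Pan p k ≤ kap p * (p : ℝ)⁻¹ ^ (k - 1) := by
  unfold Pan
  split_ifs
  exacts [(kap_mul_div_pow_le (one_sub_one_div_natCast_le_one p) p k).trans
      (kap_mul_inv_pow_le_pred p k),
    kap_mul_div_pow_le (one_sub_one_div_natCast_le_one p) p (k - 1),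
    mul_nonneg (kap_nonneg p) (by positivity)]

lemma Pat_le (p k : ℕ) : Pat p k ≤ kap p * (p : ℝ)⁻¹ ^ (k - 1) := by
  unfold Pat
  split_ifs with h6
  · subst h6
    exact kap_mul_div_pow_le (one_sub_one_div_natCast_le_one p) p 5
  · exact kap_mul_div_pow_le (one_sub_one_div_natCast_sq_le_one p) p (k - 1)
  · exact mul_nonneg (kap_nonneg p) (by positivity)

end LocalFactor

section Weights

lemma sqrt_two_le_three_halves : √2 ≤ 3 / 2 := (Real.sqrt_le_left (by norm_num)).2 (by norm_num)

lemma sqrt_three_le_two : √3 ≤ 2 := (Real.sqrt_le_left (by norm_num)).2 (by norm_num)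

lemma epsm_nonneg (k : ℕ) : 0 ≤ epsm k := by
  unfold epsm
  split_ifs <;> positivity

lemma epsm_le {k : ℕ} (hk : 1 ≤ k) : epsm k ≤ k := by
  have hk' : (1 : ℝ) ≤ k := by exact_mod_cast hk
  have hsqrt : √(k : ℝ) ≤ k := (Real.sqrt_le_left (by positivity)).2 (le_self_pow₀ hk' two_ne_zero)
  unfold epsm
  split_ifs with hodd
  · linarith [Real.one_le_sqrt.2 hk']
  · have h2 : √2 ≤ √(k : ℝ) := Real.sqrt_le_sqrt (by exact_mod_cast (by omega : 2 ≤ k))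
    linarith

lemma epsan_nonneg (k : ℕ) : 0 ≤ epsan k := by
  unfold epsan
  split_ifs <;> positivity

lemma epsan_le_two (k : ℕ) : epsan k ≤ 2 := by
  unfold epsan
  split_ifs <;> linarith [sqrt_two_le_three_halves, sqrt_three_le_two]

lemma epsat_nonneg (p k : ℕ) : 0 ≤ epsat p k := by
  have h : 1 / (3 * (p : ℝ)) ≤ 1 / 3 := by
    rcases Nat.eq_zero_or_pos p with rfl | hp
    · norm_num
    · exact div_le_div_of_nonneg_left zero_le_one three_pos
        (le_mul_of_one_le_right zero_le_three (by exact_mod_cast hp))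
  unfold epsat
  split_ifs <;> linarith [Real.sqrt_nonneg 2]

lemma epsat_le_two (p k : ℕ) : epsat p k ≤ 2 := by
  have h : 0 ≤ 1 / (3 * (p : ℝ)) := by positivity
  unfold epsat
  split_ifs <;> linarith [sqrt_two_le_three_halves]

end Weights

section Summand

variable {p : ℕ}

noncomputable def Kterm (p k : ℕ) : ℝ :=
  epsm k * Pm p k + epsan k * Pan p k + epsat p k * Pat p k + P0 p k

lemma K_eq_tsum_Kterm (p : ℕ) : K p = ∑' k, Kterm p k := rfl

lemma Kterm_nonneg (p k : ℕ) : 0 ≤ Kterm p k :=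
  add_nonneg (add_nonneg (add_nonneg (mul_nonneg (epsm_nonneg k) (Pm_nonneg p k))
    (mul_nonneg (epsan_nonneg k) (Pan_nonneg p k)))
    (mul_nonneg (epsat_nonneg p k) (Pat_nonneg p k))) (P0_nonneg p k)

lemma Kterm_zero (p : ℕ) : Kterm p 0 = kap p * (1 - (p : ℝ)⁻¹) := by
  simp [Kterm, Pm, Pan, Pat, P0, epsan, epsat]

lemma Kterm_one (p : ℕ) : Kterm p 1 = kap p * (1 - (p : ℝ)⁻¹) ^ 2 * (p : ℝ)⁻¹ := by
  norm_num [Kterm, Pm, Pan, Pat, P0, epsm, epsan, epsat, div_eq_mul_inv]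

lemma Kterm_two (p : ℕ) :
    Kterm p 2 = kap p * (√2 * (1 - (p : ℝ)⁻¹) ^ 2 + (1 - (p : ℝ)⁻¹)) * (p : ℝ)⁻¹ ^ 2 := by
  simp [Kterm, Pm, Pan, Pat, P0, epsm, epsan, epsat, div_eq_mul_inv]
  ring

lemma Kterm_le (p : ℕ) {k : ℕ} (hk : 1 ≤ k) :
    Kterm p k ≤ kap p * ((k + 4) * (p : ℝ)⁻¹ ^ (k - 1)) := by
  have hm : epsm k * Pm p k ≤ k * (kap p * (p : ℝ)⁻¹ ^ (k - 1)) :=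
    mul_le_mul (epsm_le hk) ((Pm_le p k).trans (kap_mul_inv_pow_le_pred p k)) (Pm_nonneg p k)
      k.cast_nonneg
  have han : epsan k * Pan p k ≤ 2 * (kap p * (p : ℝ)⁻¹ ^ (k - 1)) :=
    mul_le_mul (epsan_le_two k) (Pan_le p k) (Pan_nonneg p k) zero_le_two
  have hat : epsat p k * Pat p k ≤ 2 * (kap p * (p : ℝ)⁻¹ ^ (k - 1)) :=
    mul_le_mul (epsat_le_two p k) (Pat_le p k) (Pat_nonneg p k) zero_le_two
  have h0 : P0 p k = 0 := if_neg (by omega)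
  rw [Kterm, h0]
  linarith

lemma Kterm_add_three_le (p k : ℕ) :
    Kterm p (k + 3) ≤ kap p * (p : ℝ)⁻¹ ^ 2 * ((k + 7) * (p : ℝ)⁻¹ ^ k) := by
  convert Kterm_le p (k := k + 3) (by omega) using 1
  push_cast
  ring

lemma summable_Kterm (hp : 2 ≤ p) : Summable (Kterm p) :=
  (summable_nat_add_iff 3).1 <| .of_nonneg_of_le (fun _ ↦ Kterm_nonneg p _) (Kterm_add_three_le p)
    ((hasSum_coe_add_mul_geometric (norm_inv_natCast_lt_one hp) 7).summable.mul_left _)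

lemma abs_sum_range_three_Kterm_sub_one_le (hp : 5 ≤ p) :
    |∑ k ∈ Finset.range 3, Kterm p k - 1| ≤ 6 / (p : ℝ) ^ 2 := by
  simp only [Finset.sum_range_succ, Finset.sum_range_zero, zero_add, Kterm_zero, Kterm_one,
    Kterm_two]
  have hκ := kap_mul_one_sub (by omega : 2 ≤ p)
  have hκ2 := kap_le_two (by omega : 2 ≤ p)
  have hr0 : (0 : ℝ) ≤ (p : ℝ)⁻¹ := by positivity
  have hr : (p : ℝ)⁻¹ ≤ 1 / 5 := by
    rw [one_div]; exact inv_anti₀ (by norm_num) (by exact_mod_cast hp)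
  rw [div_eq_mul_inv, ← inv_pow]
  set r := (p : ℝ)⁻¹
  set s := √2
  have hs : 1 ≤ s := Real.one_le_sqrt.2 one_le_two
  have hs' := sqrt_two_le_three_halves
  -- the constant and linear terms cancel against `κ (1 - r¹⁰) = 1`
  have hE : kap p * (1 - r) + kap p * (1 - r) ^ 2 * r + kap p * (s * (1 - r) ^ 2 + (1 - r)) * r ^ 2
      - 1 = kap p * r ^ 2 * ((s - 1) - 2 * s * r + s * r ^ 2 + r ^ 8) := by
    linear_combination hκ
  have hr8 : r ^ 8 ≤ 1 := pow_le_one₀ hr0 (hr.trans (by norm_num))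
  have hY : |(s - 1) - 2 * s * r + s * r ^ 2 + r ^ 8| ≤ 3 := by
    rw [abs_le]
    constructor <;> nlinarith [pow_nonneg hr0 8]
  rw [hE, abs_mul, abs_of_nonneg (mul_nonneg (kap_nonneg p) (sq_nonneg r))]
  calc kap p * r ^ 2 * |(s - 1) - 2 * s * r + s * r ^ 2 + r ^ 8|
      ≤ 2 * r ^ 2 * 3 := by gcongr
    _ = 6 * r ^ 2 := by ring

lemma tsum_Kterm_add_three_le (hp : 5 ≤ p) : ∑' k, Kterm p (k + 3) ≤ 20 / (p : ℝ) ^ 2 := by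
  have hS := hasSum_coe_add_mul_geometric (norm_inv_natCast_lt_one (by omega : 2 ≤ p)) 7
  have hr0 : (0 : ℝ) ≤ (p : ℝ)⁻¹ := by positivity
  have hr : (p : ℝ)⁻¹ ≤ 1 / 5 := by
    rw [one_div]; exact inv_anti₀ (by norm_num) (by exact_mod_cast hp)
  have hgeom : (p : ℝ)⁻¹ / (1 - (p : ℝ)⁻¹) ^ 2 + 7 * (1 - (p : ℝ)⁻¹)⁻¹ ≤ 10 := by
    have h1 : (p : ℝ)⁻¹ / (1 - (p : ℝ)⁻¹) ^ 2 ≤ (1 / 5) / (1 - 1 / 5) ^ 2 := by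
      gcongr
    have h2 : (1 - (p : ℝ)⁻¹)⁻¹ ≤ (1 - 1 / 5)⁻¹ := by gcongr
    norm_num at h1 h2
    linarith
  calc ∑' k, Kterm p (k + 3)
      ≤ ∑' k : ℕ, kap p * (p : ℝ)⁻¹ ^ 2 * ((k + 7) * (p : ℝ)⁻¹ ^ k) :=
        ((summable_nat_add_iff 3).2 (summable_Kterm (by omega))).tsum_le_tsum
          (Kterm_add_three_le p) (hS.summable.mul_left _)
    _ = kap p * (p : ℝ)⁻¹ ^ 2 * ((p : ℝ)⁻¹ / (1 - (p : ℝ)⁻¹) ^ 2 + 7 * (1 - (p : ℝ)⁻¹)⁻¹) := by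
        rw [tsum_mul_left, hS.tsum_eq]
    _ ≤ 2 * (p : ℝ)⁻¹ ^ 2 * 10 := by
        gcongr
        · exact add_nonneg (by positivity) (mul_nonneg (by norm_num) (inv_nonneg.2 (by linarith)))
        · exact kap_le_two (by omega)
    _ = 20 / (p : ℝ) ^ 2 := by rw [inv_pow]; ring

lemma abs_K_sub_one_le (hp : 5 ≤ p) : |K p - 1| ≤ 26 / (p : ℝ) ^ 2 := by
  rw [K_eq_tsum_Kterm, ← (summable_Kterm (by omega)).sum_add_tsum_nat_add 3, add_sub_right_comm]
  have htail : 0 ≤ ∑' k, Kterm p (k + 3) := tsum_nonneg fun k ↦ Kterm_nonneg p (k + 3)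
  calc |∑ k ∈ Finset.range 3, Kterm p k - 1 + ∑' k, Kterm p (k + 3)|
      ≤ |∑ k ∈ Finset.range 3, Kterm p k - 1| + |∑' k, Kterm p (k + 3)| := abs_add_le _ _
    _ ≤ 6 / (p : ℝ) ^ 2 + 20 / (p : ℝ) ^ 2 := by
        rw [abs_of_nonneg htail]
        exact add_le_add (abs_sum_range_three_Kterm_sub_one_le hp) (tsum_Kterm_add_three_le hp)
    _ = 26 / (p : ℝ) ^ 2 := by ring

lemma K_pos (hp : 2 ≤ p) : 0 < K p := by
  refine (summable_Kterm hp).tsum_pos (Kterm_nonneg p) 0 ?_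
  rw [Kterm_zero]
  exact mul_pos (zero_lt_one.trans_le (one_le_kap hp))
    (sub_pos.2 (inv_lt_one_of_one_lt₀ (by exact_mod_cast hp)))

end Summand

theorem stmt15 :
    (∃ C > (0 : ℝ), ∀ p : ℕ, p.Prime → 5 ≤ p → |K p - 1| ≤ C / (p : ℝ) ^ 2) ∧
    Multipliable (fun p : {p : ℕ // p.Prime ∧ 5 ≤ p} => K p) ∧
    0 < ∏' p : {p : ℕ // p.Prime ∧ 5 ≤ p}, K p := by
  have hsum : Summable fun q : {p : ℕ // p.Prime ∧ 5 ≤ p} ↦ K q - 1 := by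
    refine .of_norm_bounded (((Real.summable_one_div_nat_pow.2 one_lt_two).mul_left 26).comp_injective
      Subtype.val_injective) fun q ↦ ?_
    simpa [div_eq_mul_inv] using abs_K_sub_one_le q.2.2
  have hprod := Real.hasProd_of_summable_sub_one (fun q ↦ K_pos (le_trans (by norm_num) q.2.2)) hsum
  exact ⟨⟨26, by norm_num, fun p _ hp ↦ abs_K_sub_one_le hp⟩, hprod.multipliable,
    hprod.tprod_eq ▸ exp_pos _⟩
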